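/- Let T > 0 and let A, B, R, Q, H, Γ be real constants with R > 0, Q ≥ 0, H ≥ 0. For each positive integer N with 1 − Γ/N ≥ 0 and (1 − Γ/N)(1 − Γ) ≥ 0, let P_N and Π_N be the unique C¹ solutions of the scalar Riccati terminal value problems with data (A,B,R,(1−Γ/N)Q,H) and (A,B,R,(1−Γ/N)(1−Γ)Q,H) respectively, and set K_N := Π_N − P_N. Let P̄ and Π̄ be the unique C¹ solutions with data (A,B,R,Q,H) and (A,B,R,(1−Γ)Q,H) respectively (assuming also (1−Γ)Q ≥ 0), and set K̄ := Π̄ − P̄. Then there exists a constant C ≥ 0, independent of N, such that for every such N: sup_{t∈[0,T]} |P_N(t) − P̄(t)| + sup_{t∈[0,T]} |Π_N(t) − Π̄(t)| + sup_{t∈[0,T]} |K_N(t) − K̄(t)| ≤ C/N. -/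

import Mathlib

/-- `P` is a C¹ solution on `[0,T]` of the scalar Riccati terminal value problem
with data `(A, B, R, q, H)`:
`P'(t) + 2A·P(t) − (B²/R)·P(t)² + q = 0` on `[0,T]`, `P(T) = H`. -/
def IsRiccatiSol (A B R q H T : ℝ) (P : ℝ → ℝ) : Prop :=
  ContDiffOn ℝ 1 P (Set.Icc 0 T) ∧
  (∀ t ∈ Set.Icc 0 T,
    derivWithin P (Set.Icc 0 T) t + 2 * A * P t - B ^ 2 / R * P t ^ 2 + q = 0) ∧
  P T = H

/-!
Reversing time, `u(s) = P(T - s)` solves the forward equation `u' = 2Au - bu² + q`, `u(0) = H`,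
with `b = B²/R ≥ 0`. For `q ≥ 0` the half-line `[0, ∞)` is invariant, and on it
`u' ≤ 2|A|u + q`, so Grönwall bounds every solution with `0 ≤ q ≤ ε` by one constant `M`.
On `[-M, M]` the vector field is Lipschitz in `u` with a constant independent of `q`, and a
second Grönwall estimate gives `sup |P_q - P_q'| ≤ L |q - q'|`. Finally, each coefficient
`(1 - Γ/N) q` of the `N`-follower system differs from its limit `q` by `Γ q / N`.
-/

open Set Real

theorem nonneg_of_deriv_right_ge_mul_of_neg {u u' : ℝ → ℝ} {K a b : ℝ}
    (hu : ContinuousOn u (Icc a b)) (hu' : ∀ x ∈ Ico a b, HasDerivWithinAt u (u' x) (Ici x) x)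
    (ha : 0 ≤ u a) (bound : ∀ x ∈ Ico a b, u x < 0 → K * u x ≤ u' x) :
    ∀ x ∈ Icc a b, 0 ≤ u x := by
  set L := |K| + 1
  -- `-u` can only reach the barrier `ε e^{L (x - a)} > 0` where `u < 0`, and there it is slower
  have fence : ∀ ε > 0, ∀ x ∈ Icc a b, -u x ≤ ε * exp (L * (x - a)) := by
    intro ε hε
    refine image_le_of_deriv_right_lt_deriv_boundary hu.neg (fun x hx => (hu' x hx).neg)
      (B' := fun x => L * (ε * exp (L * (x - a)))) ?_ (fun x => ?_) (fun x hx hcross => ?_)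
    · simp only [Pi.neg_apply, sub_self, mul_zero, exp_zero, mul_one]
      linarith
    · exact ((((hasDerivAt_id' x).sub_const a).const_mul L).exp.const_mul ε).congr_deriv
        (by ring)
    · rw [Pi.neg_apply] at hcross
      have hneg : u x < 0 := by linarith [mul_pos hε (exp_pos (L * (x - a)))]
      have hK : K * -u x ≤ |K| * -u x := mul_le_mul_of_nonneg_right (le_abs_self K) (by linarith)
      have := bound x hx hneg
      rw [← hcross]
      linarith
  intro x hx
  by_contra! hneg
  have hexp := exp_pos (L * (x - a))
  have E := fence (-u x / (2 * exp (L * (x - a)))) (div_pos (by linarith) (by positivity)) x hx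
  rw [div_mul_eq_mul_div, mul_div_mul_right _ _ hexp.ne'] at E
  linarith

lemma gronwallBound_nonneg {δ K ε x : ℝ} (hδ : 0 ≤ δ) (hε : 0 ≤ ε) (hK : 0 ≤ K) (hx : 0 ≤ x) :
    0 ≤ gronwallBound δ K ε x :=
  hδ.trans_eq (gronwallBound_x0 δ K ε).symm |>.trans (gronwallBound_mono hδ hε hK hx)

lemma gronwallBound_δ0 (K ε x : ℝ) :
    gronwallBound 0 K ε x = ε * gronwallBound 0 K 1 x := by
  unfold gronwallBound
  split_ifs <;> ring

def riccatiField (A b q x : ℝ) : ℝ := 2 * A * x - b * x ^ 2 + q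

lemma riccatiField_sub_riccatiField (A b q₁ q₂ x y : ℝ) :
    riccatiField A b q₁ x - riccatiField A b q₂ y =
      (2 * A - b * (x + y)) * (x - y) + (q₁ - q₂) := by
  unfold riccatiField
  ring

structure IsForwardRiccatiSol (A b q H T : ℝ) (u : ℝ → ℝ) : Prop where
  apply_zero : u 0 = H
  continuousOn : ContinuousOn u (Icc 0 T)
  hasDerivWithinAt : ∀ s ∈ Ico 0 T, HasDerivWithinAt u (riccatiField A b q (u s)) (Ici s) s

theorem IsRiccatiSol.reverse {A B R q H T : ℝ} {P : ℝ → ℝ} (hP : IsRiccatiSol A B R q H T P) :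
    IsForwardRiccatiSol A (B ^ 2 / R) q H T (fun s => P (T - s)) := by
  obtain ⟨hreg, heq, hterm⟩ := hP
  have hmaps : MapsTo (fun s : ℝ => T - s) (Icc 0 T) (Icc 0 T) := fun s hs =>
    ⟨by linarith [hs.2], by linarith [hs.1]⟩
  refine ⟨by simpa using hterm, hreg.continuousOn.comp (by fun_prop) hmaps, fun s hs => ?_⟩
  have hs' : s ∈ Icc 0 T := Ico_subset_Icc_self hs
  have hP' := ((hreg.differentiableOn one_ne_zero) (T - s) (hmaps hs')).hasDerivWithinAt
  have hrev := hP'.comp s ((hasDerivAt_id' s).const_sub T).hasDerivWithinAt hmaps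
  refine (hrev.congr_deriv ?_).mono_of_mem_nhdsWithin ?_
  · have := heq (T - s) (hmaps hs')
    unfold riccatiField
    linarith
  · exact Filter.mem_of_superset (Icc_mem_nhdsGE_of_mem ⟨le_rfl, hs.2⟩)
      (Icc_subset_Icc_left hs.1)

namespace IsForwardRiccatiSol

variable {A b q H T : ℝ} {u : ℝ → ℝ}

theorem nonneg (hu : IsForwardRiccatiSol A b q H T u) (hq : 0 ≤ q) (hH : 0 ≤ H) :
    ∀ s ∈ Icc 0 T, 0 ≤ u s := by
  obtain ⟨M, hM⟩ := isCompact_Icc.exists_bound_of_continuousOn hu.continuousOn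
  refine nonneg_of_deriv_right_ge_mul_of_neg (K := 2 * A + |b| * M) hu.continuousOn
    hu.hasDerivWithinAt (hu.apply_zero ▸ hH) fun s hs hneg => ?_
  have hbu : -(b * u s) ≤ |b| * M := by
    have := hM s (Ico_subset_Icc_self hs)
    rw [Real.norm_eq_abs] at this
    calc -(b * u s) ≤ |b * u s| := neg_le_abs _
      _ = |b| * |u s| := abs_mul _ _
      _ ≤ |b| * M := by gcongr
  have : (2 * A + |b| * M) * u s ≤ (2 * A - b * u s) * u s :=
    mul_le_mul_of_nonpos_right (by linarith) hneg.le
  unfold riccatiField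
  linarith

theorem abs_le_gronwallBound {ε : ℝ} (hu : IsForwardRiccatiSol A b q H T u) (hb : 0 ≤ b)
    (hq : 0 ≤ q) (hqε : q ≤ ε) (hH : 0 ≤ H) :
    ∀ s ∈ Icc 0 T, |u s| ≤ gronwallBound H (2 * |A|) ε T := by
  intro s hs
  have hnonneg := hu.nonneg hq hH
  have hgronwall := le_gronwallBound_of_liminf_deriv_right_le hu.continuousOn
    (fun x hx r hr => (hu.hasDerivWithinAt x hx).liminf_right_slope_le hr)
    hu.apply_zero.le (K := 2 * |A|) (ε := ε) (fun x hx => ?_) s hs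
  · rw [abs_of_nonneg (hnonneg s hs)]
    exact hgronwall.trans
      (gronwallBound_mono hH (hq.trans hqε) (by positivity) (by linarith [hs.2]))
  · have hux := hnonneg x (Ico_subset_Icc_self hx)
    have : 2 * A * u x ≤ 2 * |A| * u x := by gcongr; exact le_abs_self A
    unfold riccatiField
    nlinarith [mul_nonneg hb (sq_nonneg (u x))]

theorem abs_sub_le {q₁ q₂ M : ℝ} {u₁ u₂ : ℝ → ℝ} (h₁ : IsForwardRiccatiSol A b q₁ H T u₁)
    (h₂ : IsForwardRiccatiSol A b q₂ H T u₂)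
    (hM₁ : ∀ s ∈ Icc 0 T, |u₁ s| ≤ M) (hM₂ : ∀ s ∈ Icc 0 T, |u₂ s| ≤ M) :
    ∀ s ∈ Icc 0 T, |u₁ s - u₂ s| ≤ |q₁ - q₂| * gronwallBound 0 (2 * |A| + 2 * |b| * M) 1 T := by
  intro s hs
  have hM : 0 ≤ M := (abs_nonneg _).trans (hM₁ s hs)
  have hgronwall := norm_le_gronwallBound_of_norm_deriv_right_le (δ := 0)
    (K := 2 * |A| + 2 * |b| * M) (ε := |q₁ - q₂|) (h₁.continuousOn.sub h₂.continuousOn)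
    (fun x hx => (h₁.hasDerivWithinAt x hx).sub (h₂.hasDerivWithinAt x hx))
    (by simp [h₁.apply_zero, h₂.apply_zero]) (fun x hx => ?_) s hs
  · simp only [Real.norm_eq_abs, sub_zero, gronwallBound_δ0 _ |q₁ - q₂|] at hgronwall
    exact hgronwall.trans (mul_le_mul_of_nonneg_left (gronwallBound_mono le_rfl zero_le_one
      (by positivity) hs.2) (abs_nonneg _))
  · have hx' := Ico_subset_Icc_self hx
    have hcoef : |2 * A - b * (u₁ x + u₂ x)| ≤ 2 * |A| + 2 * |b| * M := by
      calc |2 * A - b * (u₁ x + u₂ x)| ≤ |2 * A| + |b * (u₁ x + u₂ x)| := abs_sub _ _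
        _ ≤ 2 * |A| + |b| * (M + M) := by
            rw [abs_mul 2, abs_two, abs_mul]
            gcongr
            exact (abs_add_le _ _).trans (add_le_add (hM₁ x hx') (hM₂ x hx'))
        _ = 2 * |A| + 2 * |b| * M := by ring
    simp only [Real.norm_eq_abs, Pi.sub_apply, riccatiField_sub_riccatiField]
    calc _ ≤ |2 * A - b * (u₁ x + u₂ x)| * |u₁ x - u₂ x| + |q₁ - q₂| := by
          rw [← abs_mul]; exact abs_add_le _ _
      _ ≤ _ := by gcongr

end IsForwardRiccatiSol

noncomputable def riccatiLipConst (A b H ε T : ℝ) : ℝ :=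
  gronwallBound 0 (2 * |A| + 2 * |b| * gronwallBound H (2 * |A|) ε T) 1 T

lemma riccatiLipConst_nonneg {A b H ε T : ℝ} (hH : 0 ≤ H) (hε : 0 ≤ ε) (hT : 0 ≤ T) :
    0 ≤ riccatiLipConst A b H ε T :=
  gronwallBound_nonneg le_rfl zero_le_one
    (by have := gronwallBound_nonneg hH hε (by positivity : 0 ≤ 2 * |A|) hT; positivity) hT

theorem IsRiccatiSol.abs_sub_le {A B R H T ε q₁ q₂ : ℝ} {P₁ P₂ : ℝ → ℝ} (hR : 0 ≤ R)
    (hH : 0 ≤ H) (hq₁ : q₁ ∈ Icc 0 ε) (hq₂ : q₂ ∈ Icc 0 ε)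
    (hP₁ : IsRiccatiSol A B R q₁ H T P₁) (hP₂ : IsRiccatiSol A B R q₂ H T P₂) :
    ∀ t ∈ Icc 0 T, |P₁ t - P₂ t| ≤ |q₁ - q₂| * riccatiLipConst A (B ^ 2 / R) H ε T := by
  intro t ht
  have hb : 0 ≤ B ^ 2 / R := by positivity
  have h := hP₁.reverse.abs_sub_le hP₂.reverse
    (hP₁.reverse.abs_le_gronwallBound hb hq₁.1 hq₁.2 hH)
    (hP₂.reverse.abs_le_gronwallBound hb hq₂.1 hq₂.2 hH)
    (T - t) ⟨by linarith [ht.2], by linarith [ht.1]⟩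
  simpa only [sub_sub_cancel, riccatiLipConst] using h

lemma abs_one_sub_div_natCast_le (Γ : ℝ) {N : ℕ} (hN : 0 < N) : |1 - Γ / N| ≤ 1 + |Γ| := by
  calc |1 - Γ / N| ≤ |1| + |Γ / N| := abs_sub _ _
    _ = 1 + |Γ| / N := by rw [abs_one, abs_div, Nat.abs_cast]
    _ ≤ 1 + |Γ| := by
      gcongr
      exact div_le_self (abs_nonneg Γ) (Nat.one_le_cast.2 hN)

lemma abs_one_sub_div_mul_sub_self (Γ x : ℝ) (N : ℕ) : |(1 - Γ / N) * x - x| = |Γ * x| / N := by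
  rw [show (1 - Γ / N) * x - x = -(Γ * x / N) by ring, abs_neg, abs_div, Nat.abs_cast]

lemma mul_mem_Icc_of_abs_le {c x k : ℝ} (hcx : 0 ≤ c * x) (hx : 0 ≤ x) (hc : |c| ≤ k) :
    c * x ∈ Icc 0 (k * x) :=
  ⟨hcx, mul_le_mul_of_nonneg_right ((le_abs_self c).trans hc) hx⟩

/-- Quantitative mean field limit of the Riccati equations: with
`P_N, Π_N, K_N = Π_N − P_N` the Riccati functions of the `N`-follower system and
`P̄, Π̄, K̄ = Π̄ − P̄` their mean field limits, there is a constant `C ≥ 0`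
independent of `N` such that
`sup |P_N − P̄| + sup |Π_N − Π̄| + sup |K_N − K̄| ≤ C/N`. -/
theorem riccati_meanfield_convergence (T A B R Q H Γ : ℝ)
    (hT : 0 < T) (hR : 0 < R) (hQ : 0 ≤ Q) (hH : 0 ≤ H) (hΓQ : 0 ≤ (1 - Γ) * Q)
    (Pbar Pibar : ℝ → ℝ)
    (hPbar : IsRiccatiSol A B R Q H T Pbar)
    (hPibar : IsRiccatiSol A B R ((1 - Γ) * Q) H T Pibar) :
    ∃ C : ℝ, 0 ≤ C ∧
      ∀ N : ℕ, 0 < N → 0 ≤ 1 - Γ / (N : ℝ) → 0 ≤ (1 - Γ / (N : ℝ)) * (1 - Γ) →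
        ∀ PN PiN : ℝ → ℝ,
          IsRiccatiSol A B R ((1 - Γ / (N : ℝ)) * Q) H T PN →
          IsRiccatiSol A B R ((1 - Γ / (N : ℝ)) * (1 - Γ) * Q) H T PiN →
          ∀ t ∈ Set.Icc 0 T,
            |PN t - Pbar t| + |PiN t - Pibar t|
              + |(PiN t - PN t) - (Pibar t - Pbar t)| ≤ C / (N : ℝ) := by
  set k := 1 + |Γ|
  have hk : 1 ≤ k := le_add_of_nonneg_right (abs_nonneg Γ)
  have hk2 : k ≤ k ^ 2 := le_self_pow₀ hk two_ne_zero
  set L := riccatiLipConst A (B ^ 2 / R) H (k ^ 2 * Q) T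
  refine ⟨2 * (|Γ * Q| + |Γ * ((1 - Γ) * Q)|) * L,
    mul_nonneg (by positivity) (riccatiLipConst_nonneg hH (by positivity) hT.le), ?_⟩
  intro N hN hΓN hΓN2 PN PiN hPN hPiN t ht
  have h1Γ : |1 - Γ| ≤ k := (abs_sub 1 Γ).trans_eq (by rw [abs_one])
  have h1ΓN := abs_one_sub_div_natCast_le Γ hN
  have hPdiff := IsRiccatiSol.abs_sub_le hR.le hH
    (mul_mem_Icc_of_abs_le (mul_nonneg hΓN hQ) hQ (h1ΓN.trans hk2))
    ⟨hQ, le_mul_of_one_le_left hQ (hk.trans hk2)⟩ hPN hPbar t ht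
  have hPidiff := IsRiccatiSol.abs_sub_le hR.le hH
    (mul_mem_Icc_of_abs_le (mul_nonneg hΓN2 hQ) hQ
      (by rw [abs_mul, sq]; exact mul_le_mul h1ΓN h1Γ (abs_nonneg _) (by positivity)))
    (mul_mem_Icc_of_abs_le hΓQ hQ (h1Γ.trans hk2)) hPiN hPibar t ht
  rw [abs_one_sub_div_mul_sub_self] at hPdiff
  rw [mul_assoc, abs_one_sub_div_mul_sub_self] at hPidiff
  have hKdiff : |(PiN t - PN t) - (Pibar t - Pbar t)| ≤ |PiN t - Pibar t| + |PN t - Pbar t| := by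
    rw [sub_sub_sub_comm]
    exact abs_sub _ _
  calc _ ≤ 2 * (|PN t - Pbar t| + |PiN t - Pibar t|) := by linarith
    _ ≤ 2 * (|Γ * Q| / N * L + |Γ * ((1 - Γ) * Q)| / N * L) := by gcongr
    _ = _ := by ring
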